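/- Let A, B ∈ {0,1}^{n×n} be symmetric matrices, let U ⊂ [n], and let D ∈ ℝ_{≥0}^{n×n} be right-stochastic with all entries in [0,1]. Fix x ∈ U and a 0/1 row vector d* with exactly one entry equal to 1 (the row of a permutation matrix), let d := D_{x,·}, and let D^x be the matrix obtained from D by replacing its x-th row with d*. Define Φ(D) := Σ_{u,v∈U} |(AD − DB)_{u,v}|, deg_{A,U}(x) := Σ_{u∈U} A_{u,x}, and deg_{B,U}(w) := Σ_{v∈U} B_{w,v}. Then |Φ(D^x) − Φ(D)| ≤ ‖d − d*‖₁ · (deg_{A,U}(x) + 1 + max_{w∈[n]} deg_{B,U}(w)), where ‖·‖₁ is the ℓ¹-norm on row vectors. -/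
import Mathlib


open Finset

noncomputable section

/-- (Row-replacement perturbation bound for the within-`U`
residual.) Let `A, B` be symmetric 0/1 matrices, `U ⊆ [n]`, and `D ≥ 0`
right-stochastic with entries in `[0,1]`.  Fix `x ∈ U`, let `d* = e_{j₀}` be a
row of a permutation matrix, `d = D_{x,·}`, and let `D^x` be `D` with its
`x`-th row replaced by `d*`.  With
`Φ(D) = Σ_{u,v ∈ U} |(A D - D B)_{u,v}|`,
`deg_{A,U}(x) = Σ_{u ∈ U} A_{u,x}` and `deg_{B,U}(w) = Σ_{v ∈ U} B_{w,v}`,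
we have `|Φ(D^x) - Φ(D)| ≤ ‖d - d*‖₁ (deg_{A,U}(x) + 1 + max_w deg_{B,U}(w))`. -/
theorem stmt9 (n : ℕ) (A B : Matrix (Fin n) (Fin n) ℝ)
    (hA01 : ∀ i j, A i j = 0 ∨ A i j = 1)
    (hB01 : ∀ i j, B i j = 0 ∨ B i j = 1)
    (hAsymm : A.IsSymm) (hBsymm : B.IsSymm)
    (U : Finset (Fin n))
    (D : Matrix (Fin n) (Fin n) ℝ)
    (hD0 : ∀ i j, 0 ≤ D i j) (hD1 : ∀ i j, D i j ≤ 1)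
    (hrow : ∀ i, ∑ j, D i j = 1)
    (x : Fin n) (hx : x ∈ U)
    (j₀ : Fin n) (dstar : Fin n → ℝ)
    (hdstar : dstar = fun i => if i = j₀ then 1 else 0) :
    abs ((∑ u ∈ U, ∑ v ∈ U, |(A * D.updateRow x dstar - D.updateRow x dstar * B) u v|)
        - ∑ u ∈ U, ∑ v ∈ U, |(A * D - D * B) u v|)
      ≤ (∑ i, |D x i - dstar i|) *
          ((∑ u ∈ U, A u x) + 1 + ⨆ w : Fin n, ∑ v ∈ U, B w v) := by
  classical
  set e : Fin n → ℝ := fun i => dstar i - D x i with he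
  set S : ℝ := ∑ i, |D x i - dstar i| with hS
  set M : ℝ := ⨆ w : Fin n, ∑ v ∈ U, B w v with hM
  have hA0 : ∀ i j, 0 ≤ A i j := fun i j => by rcases hA01 i j with h | h <;> simp [h]
  have hB0 : ∀ i j, 0 ≤ B i j := fun i j => by rcases hB01 i j with h | h <;> simp [h]
  have hMle : ∀ w, (∑ v ∈ U, B w v) ≤ M := fun w =>
    le_ciSup (f := fun w => ∑ v ∈ U, B w v) (Set.Finite.bddAbove (Set.finite_range _)) w
  have hM0 : (0:ℝ) ≤ M :=
    le_trans (Finset.sum_nonneg fun v _ => hB0 x v) (hMle x)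
  have hS0 : (0:ℝ) ≤ S := Finset.sum_nonneg fun i _ => abs_nonneg _
  have heS : ∀ i, |e i| = |D x i - dstar i| := fun i => by
    rw [he]; exact abs_sub_comm _ _
  -- pointwise key identity
  have key : ∀ u v, (A * D.updateRow x dstar - D.updateRow x dstar * B) u v
      = (A * D - D * B) u v
        + (A u x * e v - (if u = x then ∑ k, e k * B k v else 0)) := by
    intro u v
    have h1 : (A * D.updateRow x dstar) u v = (A * D) u v + A u x * e v := by
      simp only [Matrix.mul_apply, Matrix.updateRow_apply]
      rw [Finset.sum_congr rfl (fun k _ => show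
          A u k * (if k = x then dstar v else D k v)
            = A u k * D k v + (if k = x then A u x * e v else 0) by
        split
        · next h => subst h; simp [he]; ring
        · simp)]
      rw [Finset.sum_add_distrib, Finset.sum_ite_eq' Finset.univ x
        (fun _ => A u x * e v)]
      simp
    have h2 : (D.updateRow x dstar * B) u v
        = (D * B) u v + (if u = x then ∑ k, e k * B k v else 0) := by
      by_cases h : u = x
      · subst h
        simp only [Matrix.mul_apply, Matrix.updateRow_self, if_pos rfl, if_true]
        rw [← Finset.sum_add_distrib]
        apply Finset.sum_congr rfl
        intro k _
        simp [he]; ring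
      · simp [Matrix.mul_apply, Matrix.updateRow_apply, h]
    simp only [Matrix.sub_apply, h1, h2]
    ring
  -- bound each term
  have hstep : ∀ u ∈ U, ∀ v ∈ U,
      |(|(A * D.updateRow x dstar - D.updateRow x dstar * B) u v|
        - |(A * D - D * B) u v|)|
      ≤ A u x * |e v| + (if u = x then |∑ k, e k * B k v| else 0) := by
    intro u _ v _
    rw [key u v]
    refine (abs_abs_sub_abs_le_abs_sub _ _).trans ?_
    rw [add_sub_cancel_left]
    refine (abs_sub _ _).trans ?_
    gcongr
    · rw [abs_mul, abs_of_nonneg (hA0 u x)]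
    · split <;> simp
  -- sum up
  have habs : abs ((∑ u ∈ U, ∑ v ∈ U, |(A * D.updateRow x dstar - D.updateRow x dstar * B) u v|)
        - ∑ u ∈ U, ∑ v ∈ U, |(A * D - D * B) u v|)
      ≤ ∑ u ∈ U, ∑ v ∈ U,
        (A u x * |e v| + (if u = x then |∑ k, e k * B k v| else 0)) := by
    rw [← Finset.sum_sub_distrib]
    refine (Finset.abs_sum_le_sum_abs _ _).trans ?_
    refine Finset.sum_le_sum fun u hu => ?_
    rw [← Finset.sum_sub_distrib]
    refine (Finset.abs_sum_le_sum_abs _ _).trans ?_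
    exact Finset.sum_le_sum fun v hv => hstep u hu v hv
  refine habs.trans ?_
  have hsplit : ∑ u ∈ U, ∑ v ∈ U,
        (A u x * |e v| + (if u = x then |∑ k, e k * B k v| else 0))
      = (∑ u ∈ U, A u x) * (∑ v ∈ U, |e v|)
        + ∑ v ∈ U, |∑ k, e k * B k v| := by
    simp only [Finset.sum_add_distrib]
    congr 1
    · rw [Finset.sum_mul]
      exact Finset.sum_congr rfl fun u _ => by rw [Finset.mul_sum]
    · rw [Finset.sum_comm]
      refine Finset.sum_congr rfl fun v _ => ?_
      rw [Finset.sum_ite_eq' U x (fun _ => |∑ k, e k * B k v|), if_pos hx]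
  rw [hsplit]
  -- bound first part
  have hsub : (∑ v ∈ U, |e v|) ≤ S := by
    rw [hS]
    refine Finset.sum_le_sum_of_subset_of_nonneg (Finset.subset_univ U)
        (fun i _ _ => abs_nonneg _) |>.trans_eq ?_ |>.trans_eq rfl
    exact Finset.sum_congr rfl fun i _ => heS i
  have hdegA0 : (0:ℝ) ≤ ∑ u ∈ U, A u x := Finset.sum_nonneg fun u _ => hA0 u x
  have h1 : (∑ u ∈ U, A u x) * (∑ v ∈ U, |e v|) ≤ (∑ u ∈ U, A u x) * S :=
    mul_le_mul_of_nonneg_left hsub hdegA0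
  -- bound second part
  have h2 : (∑ v ∈ U, |∑ k, e k * B k v|) ≤ S * M := by
    have step : ∀ v ∈ U, |∑ k, e k * B k v| ≤ ∑ k, |e k| * B k v := by
      intro v _
      refine (Finset.abs_sum_le_sum_abs _ _).trans ?_
      exact Finset.sum_le_sum fun k _ => by
        rw [abs_mul, abs_of_nonneg (hB0 k v)]
    refine (Finset.sum_le_sum step).trans ?_
    rw [Finset.sum_comm]
    have : ∀ k : Fin n, ∑ v ∈ U, |e k| * B k v ≤ |e k| * M := by
      intro k
      rw [← Finset.mul_sum]
      exact mul_le_mul_of_nonneg_left (hMle k) (abs_nonneg _)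
    refine (Finset.sum_le_sum fun k _ => this k).trans ?_
    rw [← Finset.sum_mul]
    have : (∑ k, |e k|) = S := by
      rw [hS]; exact Finset.sum_congr rfl fun i _ => heS i
    rw [this]
  calc (∑ u ∈ U, A u x) * (∑ v ∈ U, |e v|) + ∑ v ∈ U, |∑ k, e k * B k v|
      ≤ (∑ u ∈ U, A u x) * S + S * M := add_le_add h1 h2
    _ ≤ S * ((∑ u ∈ U, A u x) + 1 + M) := by nlinarith [hS0, hdegA0, hM0]
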